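/- arXiv:1909.05265 — 7 statements merged into one kernel-verified Lean document; each statement's English description precedes it below -/
import Mathlib

section
/- For every positive real number x, the inequality 1/x + 1/2 < 1/(1 - e^{-x}) < 1/x + 1/2 + x/12 holds. -/
/-!
With `E = exp x`, clearing denominators turns the two bounds into the Padé-type inequalities
`E (2 - x) < 2 + x` and `x² + 6x + 12 < E (x² - 6x + 12)`. In each, the difference of the two
sides vanishes at `0`, and differentiating repeatedly reduces it to `E (1 - x) < 1`,
resp. `0 < x² E`.
-/

open Real Set

lemma lt_of_hasDerivAt_pos {f f' : ℝ → ℝ} {a b : ℝ} (hf : ∀ x ∈ Icc a b, HasDerivAt f (f' x) x)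
    (hf' : ∀ x ∈ Ioo a b, 0 < f' x) (hab : a < b) : f a < f b := by
  refine strictMonoOn_of_hasDerivWithinAt_pos (f' := f') (convex_Icc a b)
    (fun x hx => (hf x hx).continuousAt.continuousWithinAt) (fun x hx => ?_) (fun x hx => ?_)
    (left_mem_Icc.2 hab.le) (right_mem_Icc.2 hab.le) hab
  · rw [interior_Icc] at hx
    exact (hf x (Ioo_subset_Icc_self hx)).hasDerivWithinAt
  · rw [interior_Icc] at hx
    exact hf' x hx

lemma hasDerivAt_exp_mul_sq_sub_mul_add (b c x : ℝ) :
    HasDerivAt (fun y => exp y * (y ^ 2 - b * y + c))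
      (exp x * (x ^ 2 - (b - 2) * x + (c - b))) x := by
  have hp : HasDerivAt (fun y => y ^ 2 - b * y + c) (2 * x - b) x := by
    simpa using ((hasDerivAt_pow 2 x).fun_sub ((hasDerivAt_id' x).const_mul b)).add_const c
  exact ((hasDerivAt_exp x).fun_mul hp).congr_deriv (by ring)

lemma exp_mul_one_sub_lt_one {x : ℝ} (hx : x ≠ 0) : exp x * (1 - x) < 1 := by
  calc exp x * (1 - x) < exp x * exp (-x) := by gcongr; exact one_sub_lt_exp_neg hx
    _ = 1 := by rw [← exp_add, add_neg_cancel, exp_zero]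

lemma exp_mul_two_sub_lt_two_add {x : ℝ} (hx : 0 < x) : exp x * (2 - x) < 2 + x := by
  have hd (y : ℝ) : HasDerivAt (fun y => 2 + y - exp y * (2 - y)) (1 - exp y * (1 - y)) y := by
    have hp : HasDerivAt (fun y => 2 - y) (-1) y := by simpa using (hasDerivAt_id' y).const_sub 2
    exact (((hasDerivAt_id' y).const_add 2).fun_sub ((hasDerivAt_exp y).fun_mul hp)).congr_deriv
      (by ring)
  simpa using lt_of_hasDerivAt_pos (fun y _ => hd y)
    (fun y hy => sub_pos.2 (exp_mul_one_sub_lt_one hy.1.ne')) hx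

lemma two_lt_exp_mul_sq_sub_two_mul_add_two {x : ℝ} (hx : 0 < x) :
    2 < exp x * (x ^ 2 - 2 * x + 2) := by
  have hd (y : ℝ) : HasDerivAt (fun y => exp y * (y ^ 2 - 2 * y + 2)) (exp y * y ^ 2) y :=
    (hasDerivAt_exp_mul_sq_sub_mul_add 2 2 y).congr_deriv (by ring)
  simpa using lt_of_hasDerivAt_pos (fun y _ => hd y)
    (fun y hy => mul_pos (exp_pos y) (pow_pos hy.1 2)) hx

lemma two_mul_add_six_lt_exp_mul_sq_sub_four_mul_add_six {x : ℝ} (hx : 0 < x) :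
    2 * x + 6 < exp x * (x ^ 2 - 4 * x + 6) := by
  have hd (y : ℝ) : HasDerivAt (fun y => exp y * (y ^ 2 - 4 * y + 6) - (2 * y + 6))
      (exp y * (y ^ 2 - 2 * y + 2) - 2) y := by
    have hq : HasDerivAt (fun y : ℝ => 2 * y + 6) 2 y := by
      simpa using ((hasDerivAt_id' y).const_mul 2).add_const 6
    exact ((hasDerivAt_exp_mul_sq_sub_mul_add 4 6 y).fun_sub hq).congr_deriv (by ring)
  simpa using lt_of_hasDerivAt_pos (fun y _ => hd y)
    (fun y hy => sub_pos.2 (two_lt_exp_mul_sq_sub_two_mul_add_two hy.1)) hx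

lemma sq_add_six_mul_add_twelve_lt_exp_mul_sq_sub_six_mul_add_twelve {x : ℝ} (hx : 0 < x) :
    x ^ 2 + 6 * x + 12 < exp x * (x ^ 2 - 6 * x + 12) := by
  have hd (y : ℝ) : HasDerivAt (fun y => exp y * (y ^ 2 - 6 * y + 12) - (y ^ 2 + 6 * y + 12))
      (exp y * (y ^ 2 - 4 * y + 6) - (2 * y + 6)) y := by
    have hq : HasDerivAt (fun y : ℝ => y ^ 2 + 6 * y + 12) (2 * y + 6) y := by
      simpa using ((hasDerivAt_pow 2 y).fun_add ((hasDerivAt_id' y).const_mul 6)).add_const 12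
    exact ((hasDerivAt_exp_mul_sq_sub_mul_add 6 12 y).fun_sub hq).congr_deriv (by ring)
  simpa using lt_of_hasDerivAt_pos (fun y _ => hd y)
    (fun y hy => sub_pos.2 (two_mul_add_six_lt_exp_mul_sq_sub_four_mul_add_six hy.1)) hx

theorem stmt_0 (x : ℝ) (hx : 0 < x) :
    1 / x + 1 / 2 < 1 / (1 - Real.exp (-x)) ∧
    1 / (1 - Real.exp (-x)) < 1 / x + 1 / 2 + x / 12 := by
  have hE : 0 < exp x - 1 := sub_pos.2 (one_lt_exp_iff.2 hx)
  have hinv : 1 / (1 - exp (-x)) = exp x / (exp x - 1) := by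
    rw [exp_neg]
    field_simp
  rw [hinv]
  constructor
  · have : 1 / x + 1 / 2 = (2 + x) / (2 * x) := by field_simp
    rw [this, div_lt_div_iff₀ (by positivity) hE]
    linarith [exp_mul_two_sub_lt_two_add hx]
  · have : 1 / x + 1 / 2 + x / 12 = (x ^ 2 + 6 * x + 12) / (12 * x) := by field_simp; ring
    rw [this, div_lt_div_iff₀ hE (by positivity)]
    linarith [sq_add_six_mul_add_twelve_lt_exp_mul_sq_sub_six_mul_add_twelve hx]
end

section
/- For every positive real number x, e^{-x}/(1 - e^{-2x}) ≥ 1/(2x) - x/12. -/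
/-!
Since `e^{-x} / (1 - e^{-2x}) = 1 / (2 sinh x)`, clearing denominators reduces the claim to
`g(x) = x² sinh x + 6x - 6 sinh x ≥ 0` for `x ≥ 0`. The function `g` and its first two derivatives
vanish at `0`, and `g''' = x² cosh x + 6x sinh x ≥ 0` for `x > 0`, so `g ≥ 0` follows by integrating
three times.
-/

open Real

lemma apply_zero_le_of_hasDerivAt_nonneg {f f' : ℝ → ℝ} (hf : ∀ x, HasDerivAt f (f' x) x)
    (hf' : ∀ x, 0 < x → 0 ≤ f' x) {x : ℝ} (hx : 0 ≤ x) : f 0 ≤ f x :=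
  monotoneOn_of_hasDerivWithinAt_nonneg (convex_Ici 0)
    (fun y _ => (hf y).continuousAt.continuousWithinAt) (fun y _ => (hf y).hasDerivWithinAt)
    (fun y hy => hf' y (by simpa using hy)) Set.self_mem_Ici hx hx

namespace Real

lemma four_sinh_le_sq_mul_sinh_add_four_mul_cosh {x : ℝ} (hx : 0 ≤ x) :
    4 * sinh x ≤ x ^ 2 * sinh x + 4 * x * cosh x := by
  have key := apply_zero_le_of_hasDerivAt_nonneg
    (f := fun y => y ^ 2 * sinh y + 4 * y * cosh y - 4 * sinh y)
    (f' := fun y => y ^ 2 * cosh y + 6 * y * sinh y)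
    (fun y => ((((hasDerivAt_pow 2 y).mul (hasDerivAt_sinh y)).add
      (((hasDerivAt_id' y).const_mul 4).mul (hasDerivAt_cosh y))).sub
      ((hasDerivAt_sinh y).const_mul 4)).congr_deriv (by ring))
    (fun y hy => by have := sinh_pos_iff.2 hy; have := cosh_pos y; positivity) hx
  simpa using key

lemma six_cosh_le_two_mul_sinh_add_sq_mul_cosh_add_six {x : ℝ} (hx : 0 ≤ x) :
    6 * cosh x ≤ 2 * x * sinh x + x ^ 2 * cosh x + 6 := by
  have key := apply_zero_le_of_hasDerivAt_nonneg
    (f := fun y => 2 * y * sinh y + y ^ 2 * cosh y + 6 - 6 * cosh y)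
    (f' := fun y => y ^ 2 * sinh y + 4 * y * cosh y - 4 * sinh y)
    (fun y => ((((((hasDerivAt_id' y).const_mul 2).mul (hasDerivAt_sinh y)).add
      ((hasDerivAt_pow 2 y).mul (hasDerivAt_cosh y))).add_const 6).sub
      ((hasDerivAt_cosh y).const_mul 6)).congr_deriv (by ring))
    (fun y hy => by linarith [four_sinh_le_sq_mul_sinh_add_four_mul_cosh hy.le]) hx
  simpa using key

lemma six_sinh_le_sq_mul_sinh_add_six_mul {x : ℝ} (hx : 0 ≤ x) :
    6 * sinh x ≤ x ^ 2 * sinh x + 6 * x := by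
  have key := apply_zero_le_of_hasDerivAt_nonneg
    (f := fun y => y ^ 2 * sinh y + 6 * y - 6 * sinh y)
    (f' := fun y => 2 * y * sinh y + y ^ 2 * cosh y + 6 - 6 * cosh y)
    (fun y => ((((hasDerivAt_pow 2 y).mul (hasDerivAt_sinh y)).add
      ((hasDerivAt_id' y).const_mul 6)).sub
      ((hasDerivAt_sinh y).const_mul 6)).congr_deriv (by ring))
    (fun y hy => by linarith [six_cosh_le_two_mul_sinh_add_sq_mul_cosh_add_six hy.le]) hx
  simpa using key

lemma exp_neg_div_one_sub_exp_neg_two_mul (x : ℝ) :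
    exp (-x) / (1 - exp (-2 * x)) = 1 / (2 * sinh x) := by
  have h : 1 - exp (-2 * x) = exp (-x) * (2 * sinh x) := by
    rw [sinh_eq, mul_div_cancel₀ _ two_ne_zero, mul_sub, ← exp_add, ← exp_add, neg_add_cancel,
      exp_zero]
    ring_nf
  rw [h, div_mul_cancel_left₀ (exp_pos _).ne', one_div]

end Real

theorem stmt_1 (x : ℝ) (hx : 0 < x) :
    Real.exp (-x) / (1 - Real.exp (-2 * x)) ≥ 1 / (2 * x) - x / 12 := by
  have hs : 0 < sinh x := sinh_pos_iff.2 hx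
  rw [exp_neg_div_one_sub_exp_neg_two_mul, ge_iff_le,
    div_sub_div _ _ (by positivity) (by positivity), div_le_div_iff₀ (by positivity) (by positivity)]
  linarith [six_sinh_le_sq_mul_sinh_add_six_mul hx.le]
end

section
/- Let α, β > 0 be real, z a real number, and a a positive integer with a > max(-z, 0) and additionally a > β/α. Then the sum over integers n ≥ a of n^β · e^{-α(z+n)^2} is at most a^β e^{-α(a+z)^2} / (1 - e^{-2α(a+z)}). -/
/-! Expanding `(z + a + n)² = (a + z)² + 2n(a + z) + n²` and using `(a + n)^β ≤ a^β e^{βn/a}`,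
the `n`-th term is at most `a^β e^{-α(a+z)²} · rⁿ` with `r = e^{-2α(a+z)} < 1`, because
`βn/a ≤ αn²` once `β ≤ αa`; the sum is then dominated by a geometric series. -/

open Real

theorem summable_and_tsum_le_of_le_geometric {f : ℕ → ℝ} {C r : ℝ} (hf : ∀ n, 0 ≤ f n)
    (hr₀ : 0 ≤ r) (hr₁ : r < 1) (hle : ∀ n, f n ≤ C * r ^ n) :
    Summable f ∧ ∑' n, f n ≤ C / (1 - r) := by
  have hgeom : Summable (fun n ↦ C * r ^ n) := (summable_geometric_of_lt_one hr₀ hr₁).mul_left C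
  have hsum : Summable f := hgeom.of_nonneg_of_le hf hle
  refine ⟨hsum, ?_⟩
  calc ∑' n, f n ≤ ∑' n, C * r ^ n := hsum.tsum_le_tsum hle hgeom
    _ = C / (1 - r) := by rw [tsum_mul_left, tsum_geometric_of_lt_one hr₀ hr₁, div_eq_mul_inv]

theorem rpow_add_le_rpow_mul_exp {x t β : ℝ} (hx : 0 < x) (hxt : 0 ≤ x + t) (hβ : 0 ≤ β) :
    (x + t) ^ β ≤ x ^ β * exp (β * t / x) := by
  have hsplit : x + t = x * (t / x + 1) := by field_simp; ring
  have hnonneg : 0 ≤ t / x + 1 := by rw [div_add_one hx.ne', add_comm]; positivity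
  calc (x + t) ^ β = x ^ β * (t / x + 1) ^ β := by rw [hsplit, mul_rpow hx.le hnonneg]
    _ ≤ x ^ β * exp (t / x) ^ β := by gcongr; exact add_one_le_exp _
    _ = x ^ β * exp (β * t / x) := by rw [← exp_mul]; ring_nf

theorem rpow_mul_exp_neg_sq_le_geometric {α β z a : ℝ} (hβ : 0 ≤ β) (ha : 0 < a) (hβa : β ≤ α * a)
    (n : ℕ) :
    (a + n) ^ β * exp (-α * (z + (a + n)) ^ 2) ≤
      a ^ β * exp (-α * (a + z) ^ 2) * exp (-2 * α * (a + z)) ^ n := by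
  have hn : (n : ℝ) ≤ (n : ℝ) ^ 2 := by exact_mod_cast Nat.le_self_pow two_ne_zero n
  have hexp : β * n / a ≤ α * n ^ 2 := by
    rw [div_le_iff₀ ha]
    nlinarith
  calc (a + n) ^ β * exp (-α * (z + (a + n)) ^ 2)
      ≤ a ^ β * exp (β * n / a) * exp (-α * (z + (a + n)) ^ 2) := by
        gcongr
        exact rpow_add_le_rpow_mul_exp ha (by positivity) hβ
    _ = a ^ β * exp (β * n / a + -α * (z + (a + n)) ^ 2) := by rw [mul_assoc, ← exp_add]
    _ ≤ a ^ β * exp (-α * (a + z) ^ 2 + n * (-2 * α * (a + z))) := by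
        gcongr a ^ β * exp ?_
        have hsq : (z + (a + n)) ^ 2 = (a + z) ^ 2 + 2 * n * (a + z) + n ^ 2 := by ring
        rw [hsq]
        linarith
    _ = a ^ β * exp (-α * (a + z) ^ 2) * exp (-2 * α * (a + z)) ^ n := by
        rw [exp_add, ← exp_nat_mul]
        ring

theorem stmt_4 (α β z : ℝ) (a : ℕ) (hα : 0 < α) (hβ : 0 < β)
    (ha : (a : ℝ) > max (-z) 0) (hab : (a : ℝ) > β / α) :
    Summable (fun n : ℕ => ((a + n : ℝ)) ^ β * Real.exp (-α * (z + (a + n)) ^ 2)) ∧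
    (∑' n : ℕ, ((a + n : ℝ)) ^ β * Real.exp (-α * (z + (a + n)) ^ 2))
      ≤ (a : ℝ) ^ β * Real.exp (-α * ((a : ℝ) + z) ^ 2) /
        (1 - Real.exp (-2 * α * ((a : ℝ) + z))) := by
  obtain ⟨hz, ha₀⟩ := max_lt_iff.mp ha
  have haz : 0 < (a : ℝ) + z := by linarith
  have hβa : β ≤ α * a := by
    rw [gt_iff_lt, div_lt_iff₀ hα] at hab
    linarith
  have hr₁ : exp (-2 * α * ((a : ℝ) + z)) < 1 := by
    rw [exp_lt_one_iff]
    nlinarith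
  exact summable_and_tsum_le_of_le_geometric (fun n ↦ by positivity) (exp_pos _).le hr₁
    (rpow_mul_exp_neg_sq_le_geometric hβ.le ha₀ hβa)
end

section
/- For every real x in [-1/2, 1/2], cos(2πx) ≤ exp(-(2πx)^2 / 2). -/
/-!
Put `t = 2πx`, so `|t| ≤ π`, and by evenness take `t ≥ 0`. The function `cos t * exp (t² / 2)`
has derivative `exp (t² / 2) * (t cos t - sin t)`, which is nonpositive on `[0, π]` because
`t cos t ≤ sin t` there (from `t ≤ tan t` below `π / 2`, and from the signs of `cos` and `sin`
above it). Hence the function is at most its value `1` at `0`.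
-/

open Real Set

lemma Real.mul_cos_le_sin {t : ℝ} (h0 : 0 ≤ t) (hπ : t ≤ π) : t * cos t ≤ sin t := by
  rcases lt_or_ge t (π / 2) with ht | ht
  · have hcos : 0 < cos t := cos_pos_of_mem_Ioo ⟨by linarith [pi_pos], ht⟩
    have := le_tan h0 ht
    rwa [tan_eq_sin_div_cos, le_div_iff₀ hcos] at this
  · have hcos : cos t ≤ 0 := cos_nonpos_of_pi_div_two_le_of_le ht (by linarith)
    nlinarith [sin_nonneg_of_nonneg_of_le_pi h0 hπ]

lemma Real.antitoneOn_cos_mul_exp_sq_div_two :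
    AntitoneOn (fun t ↦ cos t * exp (t ^ 2 / 2)) (Icc 0 π) := by
  refine antitoneOn_of_hasDerivWithinAt_nonpos (convex_Icc 0 π) (by fun_prop)
    (f' := fun t ↦ exp (t ^ 2 / 2) * (t * cos t - sin t)) (fun t _ ↦ ?_) (fun t ht ↦ ?_)
  · have hexp : HasDerivAt (fun t ↦ exp (t ^ 2 / 2)) (exp (t ^ 2 / 2) * t) t := by
      simpa using ((hasDerivAt_pow 2 t).div_const 2).exp
    exact (((hasDerivAt_cos t).fun_mul hexp).congr_deriv (by ring)).hasDerivWithinAt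
  · rw [interior_Icc] at ht
    exact mul_nonpos_of_nonneg_of_nonpos (exp_pos _).le
      (sub_nonpos.2 (mul_cos_le_sin ht.1.le ht.2.le))

lemma Real.cos_le_exp_neg_sq_div_two {t : ℝ} (ht : |t| ≤ π) : cos t ≤ exp (-t ^ 2 / 2) := by
  have hanti : cos t * exp (t ^ 2 / 2) ≤ 1 := by
    simpa [cos_abs, sq_abs] using
      antitoneOn_cos_mul_exp_sq_div_two ⟨le_rfl, pi_pos.le⟩ ⟨abs_nonneg t, ht⟩ (abs_nonneg t)
  rwa [neg_div, exp_neg, ← one_div, le_div_iff₀ (exp_pos _)]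

theorem stmt_6 (x : ℝ) (hx : x ∈ Set.Icc (-(1:ℝ)/2) (1/2)) :
    Real.cos (2 * Real.pi * x) ≤ Real.exp (-(2 * Real.pi * x) ^ 2 / 2) := by
  refine cos_le_exp_neg_sq_div_two ?_
  rw [abs_mul, abs_of_pos two_pi_pos]
  have hx' : |x| ≤ 1 / 2 := abs_le.2 ⟨by linarith [hx.1], hx.2⟩
  nlinarith [two_pi_pos]
end

section
/- For σ > 0 and real z with -1 < z < 1, the Jacobi theta value θ₃(z, iσ) satisfies the two-sided bound σ^{-1/2} e^{-πz²/σ} ≤ θ₃(z, iσ) ≤ σ^{-1/2} ( e^{-πz²/σ} + e^{-π(1+z)²/σ}/(1 - e^{-2π(1+z)/σ}) + e^{-π(1-z)²/σ}/(1 - e^{-2π(1-z)/σ}) ). -/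
/-- Periodized-Gaussian representation of the Jacobi theta value θ₃(z, iσ). -/
noncomputable def jacobiTheta3R (z σ : ℝ) : ℝ :=
  σ ^ (-(1 : ℝ) / 2) * ∑' m : ℤ, Real.exp (-(Real.pi / σ) * (z + m) ^ 2)

/-!
Split the lattice sum into the term `m = 0`, the terms `m ≥ 1` and the terms `m ≤ -1`.
Since `-a (w + n)² ≤ -a w² - 2 a w n`, each of the two tails, written as
`∑ₙ exp (-a (w + n)²)` with `w = 1 ± z > 0`, is dominated by a geometric series of ratio
`exp (-2 a w) < 1`. The lower bound is the term `m = 0` of a series of positive terms.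
-/

open Real

section GaussianTail

variable {a : ℝ}

theorem exp_neg_mul_add_sq_le_geometric (ha : 0 ≤ a) (w : ℝ) (n : ℕ) :
    exp (-a * (w + n) ^ 2) ≤ exp (-a * w ^ 2) * exp (-2 * a * w) ^ n := by
  rw [← exp_nat_mul, ← exp_add, exp_le_exp, ← sub_nonneg]
  have hdiff : -a * w ^ 2 + n * (-2 * a * w) - -a * (w + n) ^ 2 = a * (n : ℝ) ^ 2 := by ring
  rw [hdiff]
  positivity

theorem exp_neg_two_mul_mul_lt_one (ha : 0 < a) {w : ℝ} (hw : 0 < w) :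
    exp (-2 * a * w) < 1 :=
  exp_lt_one_iff.2 (mul_neg_of_neg_of_pos (mul_neg_of_neg_of_pos (by norm_num) ha) hw)

theorem summable_geometric_exp_neg_two_mul_mul (ha : 0 < a) {w : ℝ} (hw : 0 < w) :
    Summable fun n : ℕ => exp (-a * w ^ 2) * exp (-2 * a * w) ^ n :=
  (summable_geometric_of_lt_one (exp_pos _).le (exp_neg_two_mul_mul_lt_one ha hw)).mul_left _

theorem summable_exp_neg_mul_add_sq (ha : 0 < a) {w : ℝ} (hw : 0 < w) :
    Summable fun n : ℕ => exp (-a * (w + n) ^ 2) :=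
  (summable_geometric_exp_neg_two_mul_mul ha hw).of_nonneg_of_le (fun _ => (exp_pos _).le)
    (exp_neg_mul_add_sq_le_geometric ha.le w)

theorem tsum_exp_neg_mul_add_sq_le (ha : 0 < a) {w : ℝ} (hw : 0 < w) :
    ∑' n : ℕ, exp (-a * (w + n) ^ 2) ≤ exp (-a * w ^ 2) / (1 - exp (-2 * a * w)) :=
  calc ∑' n : ℕ, exp (-a * (w + n) ^ 2)
      ≤ ∑' n : ℕ, exp (-a * w ^ 2) * exp (-2 * a * w) ^ n :=
        (summable_exp_neg_mul_add_sq ha hw).tsum_le_tsum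
          (exp_neg_mul_add_sq_le_geometric ha.le w) (summable_geometric_exp_neg_two_mul_mul ha hw)
    _ = exp (-a * w ^ 2) / (1 - exp (-2 * a * w)) := by
        rw [tsum_mul_left, tsum_geometric_of_lt_one (exp_pos _).le
          (exp_neg_two_mul_mul_lt_one ha hw), div_eq_mul_inv]

end GaussianTail

section LatticeSum

variable {a z : ℝ}

theorem exp_neg_mul_add_natCast_add_one_sq (n : ℕ) :
    exp (-a * (z + ((n + 1 : ℤ) : ℝ)) ^ 2) = exp (-a * ((1 + z) + n) ^ 2) := by
  push_cast; ring_nf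

theorem exp_neg_mul_add_neg_natCast_add_one_sq (n : ℕ) :
    exp (-a * (z + ((-(n + 1) : ℤ) : ℝ)) ^ 2) = exp (-a * ((1 - z) + n) ^ 2) := by
  push_cast; ring_nf

theorem summable_exp_neg_mul_add_natCast_add_one_sq (ha : 0 < a) (hz₁ : -1 < z) :
    Summable fun n : ℕ => exp (-a * (z + ((n + 1 : ℤ) : ℝ)) ^ 2) := by
  simpa only [exp_neg_mul_add_natCast_add_one_sq]
    using summable_exp_neg_mul_add_sq ha (by linarith : 0 < 1 + z)

theorem summable_exp_neg_mul_add_neg_natCast_add_one_sq (ha : 0 < a) (hz₂ : z < 1) :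
    Summable fun n : ℕ => exp (-a * (z + ((-(n + 1) : ℤ) : ℝ)) ^ 2) := by
  simpa only [exp_neg_mul_add_neg_natCast_add_one_sq]
    using summable_exp_neg_mul_add_sq ha (by linarith : 0 < 1 - z)

theorem summable_int_exp_neg_mul_add_sq (ha : 0 < a) (hz₁ : -1 < z) (hz₂ : z < 1) :
    Summable fun m : ℤ => exp (-a * (z + m) ^ 2) :=
  .of_add_one_of_neg_add_one (summable_exp_neg_mul_add_natCast_add_one_sq ha hz₁)
    (summable_exp_neg_mul_add_neg_natCast_add_one_sq ha hz₂)

theorem exp_neg_mul_sq_le_tsum_int (ha : 0 < a) (hz₁ : -1 < z) (hz₂ : z < 1) :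
    exp (-a * z ^ 2) ≤ ∑' m : ℤ, exp (-a * (z + m) ^ 2) := by
  simpa using (summable_int_exp_neg_mul_add_sq ha hz₁ hz₂).le_tsum 0 fun _ _ => (exp_pos _).le

theorem tsum_int_exp_neg_mul_add_sq_le (ha : 0 < a) (hz₁ : -1 < z) (hz₂ : z < 1) :
    ∑' m : ℤ, exp (-a * (z + m) ^ 2) ≤ exp (-a * z ^ 2)
      + exp (-a * (1 + z) ^ 2) / (1 - exp (-2 * a * (1 + z)))
      + exp (-a * (1 - z) ^ 2) / (1 - exp (-2 * a * (1 - z))) := by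
  have hplus : 0 < 1 + z := by linarith
  have hminus : 0 < 1 - z := by linarith
  have hsplit := tsum_of_add_one_of_neg_add_one (f := fun m : ℤ => exp (-a * (z + m) ^ 2))
    (summable_exp_neg_mul_add_natCast_add_one_sq ha hz₁)
    (summable_exp_neg_mul_add_neg_natCast_add_one_sq ha hz₂)
  simp only [exp_neg_mul_add_natCast_add_one_sq, exp_neg_mul_add_neg_natCast_add_one_sq,
    Int.cast_zero, add_zero] at hsplit
  rw [hsplit]
  linarith [tsum_exp_neg_mul_add_sq_le ha hplus, tsum_exp_neg_mul_add_sq_le ha hminus]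

end LatticeSum

theorem stmt_9 (z σ : ℝ) (hσ : 0 < σ) (hz₁ : -1 < z) (hz₂ : z < 1) :
    σ ^ (-(1 : ℝ) / 2) * Real.exp (-Real.pi * z ^ 2 / σ) ≤ jacobiTheta3R z σ ∧
    jacobiTheta3R z σ ≤ σ ^ (-(1 : ℝ) / 2) *
      (Real.exp (-Real.pi * z ^ 2 / σ)
        + Real.exp (-Real.pi * (1 + z) ^ 2 / σ) / (1 - Real.exp (-2 * Real.pi * (1 + z) / σ))
        + Real.exp (-Real.pi * (1 - z) ^ 2 / σ) / (1 - Real.exp (-2 * Real.pi * (1 - z) / σ))) := by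
  have ha : 0 < π / σ := div_pos pi_pos hσ
  have hquad (x : ℝ) : -π * x / σ = -(π / σ) * x := by ring
  have hlin (x : ℝ) : -2 * π * x / σ = -2 * (π / σ) * x := by ring
  have hscale : 0 ≤ σ ^ (-(1 : ℝ) / 2) := rpow_nonneg hσ.le _
  simp only [jacobiTheta3R, hquad, hlin]
  exact ⟨mul_le_mul_of_nonneg_left (exp_neg_mul_sq_le_tsum_int ha hz₁ hz₂) hscale,
    mul_le_mul_of_nonneg_left (tsum_int_exp_neg_mul_add_sq_le ha hz₁ hz₂) hscale⟩
end

section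
/- Let τ > 0 and z ∈ (-1/2, 1/2). Then |θ₃(iτz, iτ) - 1| ≤ 2 e^{-πτ(1 - 2|z|)} / (1 - e^{-2πτ}), where θ₃(iτz, iτ) = ∑_{m∈ℤ} exp(-πτm² - 2πτmz) (a real number). -/
/-!
Split the sum into the terms `m = 0` (which is `1`), `m = n + 1` and `m = -(n + 1)`. The
exponent `-πτ k² + 2πτ k |z|` at `k = n + 1` exceeds `-πτ (1 - 2|z|) - 2πτ n` by at most
`-πτ n (n - 2|z|) ≤ 0`, as `|z| < 1/2`, so both tails are dominated by the geometric series
`e^{-πτ(1 - 2|z|)} ∑ₙ e^{-2πτ n}`.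
-/

open Real

lemma norm_tsum_int_sub_zero_le_of_le_geometric {E : Type*} [NormedAddCommGroup E]
    [CompleteSpace E] {f : ℤ → E} {C r : ℝ} (hr₀ : 0 ≤ r) (hr₁ : r < 1)
    (hpos : ∀ n : ℕ, ‖f (n + 1)‖ ≤ C * r ^ n) (hneg : ∀ n : ℕ, ‖f (-(n + 1))‖ ≤ C * r ^ n) :
    ‖∑' m, f m - f 0‖ ≤ 2 * C / (1 - r) := by
  have hgeom : HasSum (fun n : ℕ => C * r ^ n) (C / (1 - r)) := by
    simpa only [div_eq_mul_inv] using (hasSum_geometric_of_lt_one hr₀ hr₁).mul_left C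
  have hsum := (Summable.of_norm_bounded hgeom.summable hpos).hasSum.of_add_one_of_neg_add_one
    (Summable.of_norm_bounded hgeom.summable hneg).hasSum
  calc ‖∑' m, f m - f 0‖ = ‖∑' n : ℕ, f (n + 1) + ∑' n : ℕ, f (-(n + 1))‖ := by
        rw [hsum.tsum_eq, add_sub_right_comm, add_sub_cancel_right]
    _ ≤ ‖∑' n : ℕ, f (n + 1)‖ + ‖∑' n : ℕ, f (-(n + 1))‖ := norm_add_le _ _
    _ ≤ C / (1 - r) + C / (1 - r) :=
        add_le_add (tsum_of_norm_bounded hgeom hpos) (tsum_of_norm_bounded hgeom hneg)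
    _ = 2 * C / (1 - r) := by ring

lemma exp_neg_mul_succ_sq_le {a z : ℝ} (ha : 0 ≤ a) (hz : |z| ≤ 1 / 2) (n : ℕ) :
    exp (-a * ((n : ℝ) + 1) ^ 2 - 2 * a * ((n : ℝ) + 1) * z)
      ≤ exp (-a * (1 - 2 * |z|)) * exp (-2 * a) ^ n := by
  rw [← exp_nat_mul, ← exp_add, exp_le_exp]
  have hn : (n : ℝ) ≤ (n : ℝ) ^ 2 := by exact_mod_cast Nat.le_self_pow two_ne_zero n
  have hzn : -((n : ℝ) + 1) * |z| ≤ ((n : ℝ) + 1) * z := by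
    nlinarith [neg_abs_le z, (n.cast_nonneg : (0 : ℝ) ≤ n)]
  nlinarith [mul_nonneg ha (sub_nonneg.2 hn), mul_nonneg ha (n.cast_nonneg : (0 : ℝ) ≤ n),
    mul_le_mul_of_nonneg_left hzn ha]

theorem stmt_10 (τ z : ℝ) (hτ : 0 < τ) (hz : z ∈ Set.Ioo (-(1:ℝ)/2) (1/2)) :
    |(∑' m : ℤ, Real.exp (-Real.pi * τ * (m : ℝ) ^ 2 - 2 * Real.pi * τ * m * z)) - 1|
      ≤ 2 * Real.exp (-Real.pi * τ * (1 - 2 * |z|)) / (1 - Real.exp (-2 * Real.pi * τ)) := by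
  have ha : 0 < π * τ := by positivity
  have hz' : |z| ≤ 1 / 2 := abs_le.2 ⟨by linarith [hz.1], hz.2.le⟩
  have hr₁ : exp (-2 * (π * τ)) < 1 := exp_lt_one_iff.2 (by linarith)
  have hpos (n : ℕ) := exp_neg_mul_succ_sq_le ha.le hz' n
  have hneg (n : ℕ) := abs_neg z ▸ exp_neg_mul_succ_sq_le (z := -z) ha.le (by rwa [abs_neg]) n
  have key := norm_tsum_int_sub_zero_le_of_le_geometric
    (f := fun m : ℤ => exp (-(π * τ) * (m : ℝ) ^ 2 - 2 * (π * τ) * m * z))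
    (C := exp (-(π * τ) * (1 - 2 * |z|))) (exp_nonneg _) hr₁
    (fun n => by simpa [Real.norm_eq_abs] using hpos n)
    (fun n => by
      rw [Real.norm_eq_abs, abs_of_nonneg (exp_nonneg _)]
      convert hneg n using 2
      push_cast
      ring)
  simpa [Real.norm_eq_abs, neg_mul, mul_assoc] using key
end

section
/- For every real x ≥ 1 (or positive integer n), the two-sided Stirling bound holds: (x/e)^x √(2πx) · e^{1/(12x+1)} ≤ Γ(x+1) ≤ (x/e)^x √(2πx) · e^{1/(12x)}. -/
/-!
Robbins' argument. Put `μ(x) = log (Γ(x+1) / ((x/e)^x √(2πx)))`. The functional equation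
`Γ(x+2) = (x+1) Γ(x+1)` gives `μ(x) - μ(x+1) = (x + 1/2) log (1 + 1/x) - 1`, and the series
of `artanh` writes this as `∑_{k ≥ 1} u^k / (2k+1)` with `u = (2x+1)⁻²`. Comparing with the
geometric series `∑ (u/3)^k` and `∑ u^k / 3` squeezes it between the consecutive differences of
`1/(12x+1)` and of `1/(12x)`. Since `μ(x+n) → 0` (Euler's limit formula for `Γ` together with
Stirling's formula for `n!`), telescoping these differences gives `1/(12x+1) ≤ μ(x) ≤ 1/(12x)`.
-/

open Real Filter Topology

noncomputable def stirlingGap (t : ℝ) : ℝ := (t + 1 / 2) * log (1 + t⁻¹) - 1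

lemma hasSum_stirlingGap {t : ℝ} (ht : 0 < t) :
    HasSum (fun k : ℕ => (1 / (2 * t + 1) ^ 2) ^ (k + 1) / (2 * k + 3)) (stirlingGap t) := by
  have hlog : HasSum (fun k : ℕ => (1 / (2 * t + 1) ^ 2) ^ k / (2 * k + 1))
      ((t + 1 / 2) * log (1 + t⁻¹)) :=
    ((hasSum_log_one_add_inv ht).mul_left (t + 1 / 2)).congr_fun fun k => by
      rw [pow_succ _ (2 * k), pow_mul]
      simp only [one_div_pow]
      field_simp
  have hshift := (hasSum_nat_add_iff' 1).mpr hlog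
  simp only [Finset.range_one, Finset.sum_singleton, pow_zero, CharP.cast_eq_zero, mul_zero,
    zero_add, div_one] at hshift
  exact hshift.congr_fun fun k => by push_cast; ring

lemma div_three_sub_le_of_hasSum {u s : ℝ} (hu : 0 ≤ u) (hu1 : u < 1)
    (hs : HasSum (fun k : ℕ => u ^ (k + 1) / (2 * k + 3)) s) : u / (3 - u) ≤ s := by
  have hgeom : HasSum (fun k : ℕ => (u / 3) ^ (k + 1)) (u / 3 * (1 - u / 3)⁻¹) :=
    ((hasSum_geometric_of_lt_one (by positivity) (by linarith)).mul_left (u / 3)).congr_fun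
      fun k => pow_succ' _ _
  have hterm (k : ℕ) : (u / 3) ^ (k + 1) ≤ u ^ (k + 1) / (2 * k + 3) := by
    have h3 : (2 * k + 3 : ℝ) ≤ 3 ^ (k + 1) := by
      have := one_add_mul_le_pow (show (-2 : ℝ) ≤ 2 by norm_num) (k + 1)
      norm_num at this
      linarith
    rw [div_pow]
    exact div_le_div_of_nonneg_left (by positivity) (by positivity) h3
  have hsum : u / (3 - u) = u / 3 * (1 - u / 3)⁻¹ := by
    have : 3 - u ≠ 0 := by linarith
    field_simp
  exact hsum ▸ hasSum_le hterm hgeom hs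

lemma le_div_three_mul_one_sub_of_hasSum {u s : ℝ} (hu : 0 ≤ u) (hu1 : u < 1)
    (hs : HasSum (fun k : ℕ => u ^ (k + 1) / (2 * k + 3)) s) : s ≤ u / (3 * (1 - u)) := by
  have hgeom : HasSum (fun k : ℕ => u ^ (k + 1) / 3) (u * (1 - u)⁻¹ / 3) :=
    (((hasSum_geometric_of_lt_one hu hu1).mul_left u).div_const 3).congr_fun
      fun k => by rw [pow_succ']
  have hterm (k : ℕ) : u ^ (k + 1) / (2 * k + 3) ≤ u ^ (k + 1) / 3 :=
    div_le_div_of_nonneg_left (by positivity) (by positivity)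
      (by linarith [k.cast_nonneg (α := ℝ)])
  have hsum : u / (3 * (1 - u)) = u * (1 - u)⁻¹ / 3 := by
    have : 1 - u ≠ 0 := by linarith
    field_simp
  exact hsum ▸ hasSum_le hterm hs hgeom

lemma one_div_two_mul_add_one_sq_lt_one {t : ℝ} (ht : 0 < t) : 1 / (2 * t + 1) ^ 2 < 1 := by
  rw [div_lt_one (by positivity)]
  nlinarith

lemma stirlingGap_le {t : ℝ} (ht : 0 < t) :
    stirlingGap t ≤ 1 / (12 * t) - 1 / (12 * (t + 1)) := by
  convert le_div_three_mul_one_sub_of_hasSum (by positivity)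
    (one_div_two_mul_add_one_sq_lt_one ht) (hasSum_stirlingGap ht) using 1
  have h : 3 * (1 - 1 / (2 * t + 1) ^ 2) = 12 * t * (t + 1) / (2 * t + 1) ^ 2 := by
    field_simp
    ring
  rw [h]
  field_simp
  ring

-- The last step, `12 / ((12t+1) (12t+13)) ≤ 1 / (12t² + 12t + 2)`, holds iff `t ≥ 11/24`.
lemma le_stirlingGap {t : ℝ} (ht : 1 / 2 ≤ t) :
    1 / (12 * t + 1) - 1 / (12 * (t + 1) + 1) ≤ stirlingGap t := by
  have ht0 : 0 < t := by linarith
  refine le_trans ?_ (div_three_sub_le_of_hasSum (by positivity)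
    (one_div_two_mul_add_one_sq_lt_one ht0) (hasSum_stirlingGap ht0))
  have h : 3 - 1 / (2 * t + 1) ^ 2 = (12 * t ^ 2 + 12 * t + 2) / (2 * t + 1) ^ 2 := by
    field_simp
    ring
  rw [h, div_div_div_cancel_right₀ (by positivity),
    div_sub_div _ _ (by positivity) (by positivity),
    div_le_div_iff₀ (by positivity) (by positivity)]
  nlinarith

noncomputable def stirlingError (x : ℝ) : ℝ :=
  log (Gamma (x + 1) / ((x / exp 1) ^ x * √(2 * π * x)))

lemma stirlingError_eq {x : ℝ} (hx : 0 < x) :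
    stirlingError x = log (Gamma (x + 1)) - (x + 1 / 2) * log x + x - log (2 * π) / 2 := by
  have hΓ : 0 < Gamma (x + 1) := Gamma_pos_of_pos (by linarith)
  rw [stirlingError, log_div hΓ.ne' (by positivity), log_mul (by positivity) (by positivity),
    log_rpow (by positivity), log_div hx.ne' (exp_pos 1).ne', log_exp, log_sqrt (by positivity),
    log_mul (by positivity) hx.ne']
  ring

lemma stirlingError_sub_stirlingError_add_one {x : ℝ} (hx : 0 < x) :
    stirlingError x - stirlingError (x + 1) = stirlingGap x := by
  have hΓ : 0 < Gamma (x + 1) := Gamma_pos_of_pos (by linarith)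
  rw [stirlingError_eq hx, stirlingError_eq (by linarith), stirlingGap,
    Gamma_add_one (show x + 1 ≠ 0 by linarith),
    log_mul (by linarith) hΓ.ne', inv_eq_one_div, one_add_div hx.ne', log_div (by linarith) hx.ne']
  ring

lemma Gamma_add_natCast_add_one {x : ℝ} (hx : 0 < x) (n : ℕ) :
    Gamma (x + n + 1) = Gamma x * ∏ j ∈ Finset.range (n + 1), (x + j) := by
  induction n with
  | zero => simp [Gamma_add_one hx.ne', mul_comm]
  | succ n ih =>
    rw [Finset.prod_range_succ, ← mul_assoc, ← ih, Nat.cast_succ,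
      Gamma_add_one (by positivity), mul_comm]
    ring_nf

lemma tendsto_log_Gamma_add_natCast_sub {x : ℝ} (hx : 0 < x) :
    Tendsto (fun n : ℕ => log (Gamma (x + n + 1)) - log (Gamma (n + 1)) - x * log n)
      atTop (𝓝 0) := by
  have hΓ : 0 < Gamma x := Gamma_pos_of_pos hx
  have hlim : Tendsto (fun n : ℕ => log (Gamma x) - log (GammaSeq x n)) atTop
      (𝓝 (log (Gamma x) - log (Gamma x))) :=
    tendsto_const_nhds.sub ((continuousAt_log hΓ.ne').tendsto.comp (GammaSeq_tendsto_Gamma x))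
  rw [sub_self] at hlim
  refine hlim.congr' ?_
  filter_upwards [eventually_ge_atTop 1] with n hn
  have hn0 : (0 : ℝ) < n := by exact_mod_cast hn
  have hprod : ∏ j ∈ Finset.range (n + 1), (x + j) = Gamma (x + n + 1) / Gamma x := by
    rw [Gamma_add_natCast_add_one hx n, mul_div_cancel_left₀ _ hΓ.ne']
  have hΓn : 0 < Gamma (x + n + 1) := Gamma_pos_of_pos (by positivity)
  rw [GammaSeq, hprod, Gamma_nat_eq_factorial, log_div (by positivity) (by positivity),
    log_mul (by positivity) (by positivity), log_div hΓn.ne' hΓ.ne', log_rpow hn0]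
  ring

lemma stirlingError_natCast (n : ℕ) :
    stirlingError n = log (Stirling.stirlingSeq n / √π) := by
  rw [stirlingError, Gamma_nat_eq_factorial, rpow_natCast, Stirling.stirlingSeq,
    show 2 * π * n = 2 * n * π by ring, sqrt_mul (by positivity), div_div]
  ring_nf

lemma tendsto_stirlingError_natCast :
    Tendsto (fun n : ℕ => stirlingError n) atTop (𝓝 0) := by
  have hπ : √π ≠ 0 := (sqrt_pos.mpr pi_pos).ne'
  have h := (continuousAt_log one_ne_zero).tendsto.comp
    (div_self hπ ▸ Stirling.tendsto_stirlingSeq_sqrt_pi.div_const √π)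
  rw [log_one] at h
  simpa only [stirlingError_natCast, Function.comp_def] using h

lemma tendsto_add_half_mul_log_add_sub_log {x : ℝ} (hx : 0 < x) :
    Tendsto (fun n : ℕ => (x + n + 1 / 2) * (log (x + n) - log n)) atTop (𝓝 x) := by
  have hmain : Tendsto (fun n : ℕ => (n : ℝ) * log (1 + x / n)) atTop (𝓝 x) :=
    (tendsto_mul_log_one_add_div_atTop x).comp tendsto_natCast_atTop_atTop
  have hsmall : Tendsto (fun n : ℕ => log (1 + x / n)) atTop (𝓝 0) := by
    have h := (tendsto_const_div_atTop_nhds_zero_nat x).const_add 1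
    rw [add_zero] at h
    have h := (continuousAt_log one_ne_zero).tendsto.comp h
    rwa [log_one] at h
  have h := hmain.add (hsmall.const_mul (x + 1 / 2))
  rw [mul_zero, add_zero] at h
  refine h.congr' ?_
  filter_upwards [eventually_ge_atTop 1] with n hn
  have hn0 : (0 : ℝ) < n := by exact_mod_cast hn
  rw [← log_div (by positivity) hn0.ne', add_div_eq_mul_add_div _ _ hn0.ne', one_mul,
    add_comm (n : ℝ)]
  ring

lemma tendsto_stirlingError_add_natCast {x : ℝ} (hx : 0 < x) :
    Tendsto (fun n : ℕ => stirlingError (x + n)) atTop (𝓝 0) := by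
  have h := ((tendsto_stirlingError_natCast.add (tendsto_log_Gamma_add_natCast_sub hx)).sub
    (tendsto_add_half_mul_log_add_sub_log hx)).add_const x
  rw [add_zero, zero_sub, neg_add_cancel] at h
  refine h.congr' ?_
  filter_upwards [eventually_ge_atTop 1] with n hn
  have hn0 : (0 : ℝ) < n := by exact_mod_cast hn
  rw [stirlingError_eq hn0, stirlingError_eq (by positivity)]
  ring

lemma nonpos_of_le_add_one_of_tendsto {f : ℝ → ℝ} {x : ℝ}
    (hf : ∀ n : ℕ, f (x + n) ≤ f (x + n + 1))
    (hlim : Tendsto (fun n : ℕ => f (x + n)) atTop (𝓝 0)) : f x ≤ 0 := by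
  have hmono : Monotone fun n : ℕ => f (x + n) :=
    monotone_nat_of_le_succ fun n => by simpa only [Nat.cast_succ, ← add_assoc] using hf n
  simpa using hmono.ge_of_tendsto hlim 0

lemma tendsto_one_div_mul_add_natCast {a : ℝ} (ha : 0 < a) (x b : ℝ) :
    Tendsto (fun n : ℕ => 1 / (a * (x + n) + b)) atTop (𝓝 0) := by
  simp only [one_div]
  refine tendsto_inv_atTop_zero.comp (tendsto_atTop_add_const_right _ b ?_)
  exact (tendsto_atTop_add_const_left _ x tendsto_natCast_atTop_atTop).const_mul_atTop ha

lemma stirlingError_le {x : ℝ} (hx : 0 < x) : stirlingError x ≤ 1 / (12 * x) := by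
  have hinv := tendsto_one_div_mul_add_natCast (by norm_num : (0 : ℝ) < 12) x 0
  simp only [add_zero] at hinv
  have hlim := (tendsto_stirlingError_add_natCast hx).sub hinv
  rw [sub_zero] at hlim
  refine sub_nonpos.mp (nonpos_of_le_add_one_of_tendsto
    (f := fun t => stirlingError t - 1 / (12 * t)) (fun n => ?_) hlim)
  have ht : 0 < x + n := by positivity
  have := stirlingGap_le ht
  rw [← stirlingError_sub_stirlingError_add_one ht] at this
  linarith

lemma le_stirlingError {x : ℝ} (hx : 1 / 2 ≤ x) : 1 / (12 * x + 1) ≤ stirlingError x := by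
  have hlim := (tendsto_one_div_mul_add_natCast (by norm_num : (0 : ℝ) < 12) x 1).sub
    (tendsto_stirlingError_add_natCast (by linarith))
  rw [sub_zero] at hlim
  refine sub_nonpos.mp (nonpos_of_le_add_one_of_tendsto
    (f := fun t => 1 / (12 * t + 1) - stirlingError t) (fun n => ?_) hlim)
  have ht : 1 / 2 ≤ x + n := by linarith [n.cast_nonneg (α := ℝ)]
  have := le_stirlingGap ht
  rw [← stirlingError_sub_stirlingError_add_one (by linarith)] at this
  linarith

theorem stmt_19 (x : ℝ) (hx : 1 ≤ x) :
    (x / Real.exp 1) ^ x * Real.sqrt (2 * Real.pi * x) * Real.exp (1 / (12 * x + 1))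
      ≤ Real.Gamma (x + 1) ∧
    Real.Gamma (x + 1)
      ≤ (x / Real.exp 1) ^ x * Real.sqrt (2 * Real.pi * x) * Real.exp (1 / (12 * x)) := by
  have hx0 : 0 < x := by linarith
  have hS : 0 < (x / exp 1) ^ x * √(2 * π * x) := by positivity
  have hΓ : Gamma (x + 1) = (x / exp 1) ^ x * √(2 * π * x) * exp (stirlingError x) := by
    rw [stirlingError, exp_log (div_pos (Gamma_pos_of_pos (by linarith)) hS),
      mul_div_cancel₀ _ hS.ne']
  rw [hΓ]
  constructor
  · gcongr
    exact le_stirlingError (by linarith)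
  · gcongr
    exact stirlingError_le hx0
end
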